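/- Let h : ℤ → ℤ be a C2-admissible numerical function with parameter s and biliaison type (k_1,...,k_s) where k_i = #{n ∈ ℤ : h(n) ≥ s+1-i}. Then h is of decreasing type if and only if k_{i+1} ≤ k_i + 2 for all 1 ≤ i ≤ s-1 (i.e., the biliaison type has no gaps). -/

import Mathlib

/-!
On `[s - 1, ∞)` the function `h` decreases weakly from `h (s - 1) = s` to `0`, so for
`1 ≤ c ≤ s` the superlevel set `{n | c ≤ h n}` is an interval `[c - 1, t_c]`. Hence, with
`c = s + 1 - i`, the difference `k (i + 1) - k i - 1 = t_(c-1) - t_c` counts the `n ≥ s` with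
`h n = c - 1`: a gap is the same as a plateau `h (n + 1) = h n` at a value in `[1, s - 1]`.
Every drop of `h` happens after `s - 1`, where `h ≤ s`, so such plateaus are exactly what
keeps `h` from being of decreasing type.
-/

def C2Admissible (h : ℤ → ℤ) (s : ℤ) : Prop :=
  1 ≤ s ∧ (∀ n < 0, h n = 0) ∧ (∀ n, 0 ≤ n → n ≤ s - 1 → h n = n + 1) ∧
  (∀ n, s - 1 ≤ n → h (n + 1) ≤ h n) ∧ (∃ N, ∀ n ≥ N, h n = 0)

def DecreasingType (h : ℤ → ℤ) : Prop :=
  ∀ a, h (a + 1) < h a → ∀ n, a ≤ n → h (n + 1) < h n ∨ h n = 0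

noncomputable def genus (h : ℤ → ℤ) : ℤ :=
  ∑ᶠ n : ℤ, if 2 ≤ n then (n - 1) * h n else 0

def hCI (m n ℓ : ℤ) : ℤ :=
  if 0 ≤ ℓ ∧ ℓ ≤ m - 1 then ℓ + 1
  else if m - 1 ≤ ℓ ∧ ℓ ≤ n - 1 then m
  else if n - 1 ≤ ℓ ∧ ℓ ≤ m + n - 1 then m + n - 1 - ℓ
  else 0

theorem Int.ncard_Icc (a b : ℤ) : (Set.Icc a b).ncard = (b + 1 - a).toNat := by
  rw [← Finset.coe_Icc, Set.ncard_coe_finset, Int.card_Icc]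

def HasPlateauAt (h : ℤ → ℤ) (v : ℤ) : Prop :=
  ∃ n, h (n + 1) = h n ∧ h n = v

namespace C2Admissible

variable {h : ℤ → ℤ} {s : ℤ}

theorem apply_succ_le (hadm : C2Admissible h s) {n : ℤ} (hn : s - 1 ≤ n) : h (n + 1) ≤ h n :=
  hadm.2.2.2.1 n hn

theorem exists_forall_ge_apply_eq_zero (hadm : C2Admissible h s) : ∃ N, ∀ n ≥ N, h n = 0 :=
  hadm.2.2.2.2

theorem apply_eq_max (hadm : C2Admissible h s) {n : ℤ} (hn : n ≤ s - 1) :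
    h n = max (n + 1) 0 := by
  obtain ⟨-, hneg, hinit, -⟩ := hadm
  rcases lt_or_ge n 0 with hn0 | hn0
  · rw [hneg n hn0]; omega
  · rw [hinit n hn0 hn]; omega

theorem apply_sub_one (hadm : C2Admissible h s) : h (s - 1) = s := by
  rw [hadm.apply_eq_max le_rfl]; have := hadm.1; omega

theorem antitoneOn (hadm : C2Admissible h s) : AntitoneOn h (Set.Ici (s - 1)) :=
  antitoneOn_of_succ_le Set.ordConnected_Ici fun a _ ha _ => by
    simpa using hadm.apply_succ_le ha

theorem apply_nonneg (hadm : C2Admissible h s) (n : ℤ) : 0 ≤ h n := by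
  obtain ⟨N, hN⟩ := hadm.exists_forall_ge_apply_eq_zero
  rcases le_or_gt n (s - 1) with hn | hn
  · rw [hadm.apply_eq_max hn]; omega
  · have := hadm.antitoneOn (Set.mem_Ici.2 hn.le) (Set.mem_Ici.2 (by omega : s - 1 ≤ max n N))
      (le_max_left n N)
    rw [hN _ (le_max_right n N)] at this
    exact this

theorem sub_one_le_of_apply_succ_lt (hadm : C2Admissible h s) {a : ℤ} (hdrop : h (a + 1) < h a) :
    s - 1 ≤ a := by
  by_contra! ha
  rw [hadm.apply_eq_max ha.le, hadm.apply_eq_max (by omega : a + 1 ≤ s - 1)] at hdrop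
  omega

theorem sub_one_le_of_apply_succ_eq (hadm : C2Admissible h s) {n : ℤ} (hflat : h (n + 1) = h n)
    (hn : h n ≠ 0) : s - 1 ≤ n := by
  by_contra! hlt
  have := hadm.apply_eq_max hlt.le
  have := hadm.apply_eq_max (by omega : n + 1 ≤ s - 1)
  omega

theorem setOf_le_eq_Icc (hadm : C2Admissible h s) {c : ℤ} (hc : 1 ≤ c) (hcs : c ≤ s) :
    ∃ t, s - 1 ≤ t ∧ {n | c ≤ h n} = Set.Icc (c - 1) t := by
  obtain ⟨N, hN⟩ := hadm.exists_forall_ge_apply_eq_zero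
  have hbdd : ∀ n, c ≤ h n → n ≤ N := fun n hn => by
    by_contra! hlt
    rw [hN n hlt.le] at hn
    omega
  have hcs' : c ≤ h (s - 1) := hadm.apply_sub_one.symm ▸ hcs
  obtain ⟨t, ht, hmax⟩ := Int.exists_greatest_of_bdd ⟨N, hbdd⟩ ⟨s - 1, hcs'⟩
  refine ⟨t, hmax _ hcs', Set.ext fun n => ⟨fun hn => ⟨?_, hmax n hn⟩, ?_⟩⟩
  · by_contra! hlt
    rw [Set.mem_ofPred_eq, hadm.apply_eq_max (by omega)] at hn
    omega
  · rintro ⟨hn, hnt⟩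
    rcases le_or_gt n (s - 1) with hns | hns
    · rw [Set.mem_ofPred_eq, hadm.apply_eq_max hns]; omega
    · exact ht.trans (hadm.antitoneOn (Set.mem_Ici.2 hns.le) (Set.mem_Ici.2 (by omega)) hnt)

theorem decreasingType_iff (hadm : C2Admissible h s) :
    DecreasingType h ↔ ∀ v, 1 ≤ v → v ≤ s - 1 → ¬ HasPlateauAt h v := by
  constructor
  · rintro hdec v hv1 hvs ⟨n, hflat, rfl⟩
    have hn := hadm.sub_one_le_of_apply_succ_eq hflat (by omega)
    obtain ⟨t, ht, hset⟩ := hadm.setOf_le_eq_Icc (c := h n + 1) (by omega) (by omega)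
    have hmem : ∀ m, h n + 1 ≤ h m ↔ h n ≤ m ∧ m ≤ t := fun m => by
      simpa using Set.ext_iff.1 hset m
    have hdrop : h (t + 1) < h t := by
      have := (hmem t).2 ⟨by omega, le_rfl⟩
      have := (hmem (t + 1)).not.2 (by omega)
      omega
    have htn : t ≤ n := by
      have := (hmem n).not.1 (by omega)
      omega
    rcases hdec t hdrop n htn with h | h <;> omega
  · intro hflat a hdrop n han
    by_contra! hn
    have ha := hadm.sub_one_le_of_apply_succ_lt hdrop
    have heq : h (n + 1) = h n :=
      le_antisymm (hadm.apply_succ_le (by omega)) hn.1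
    have hna : a < n := lt_of_le_of_ne han (by rintro rfl; omega)
    have hle : h n ≤ h (a + 1) :=
      hadm.antitoneOn (Set.mem_Ici.2 (by omega)) (Set.mem_Ici.2 (by omega)) (by omega)
    have has : h a ≤ s := by
      rw [← hadm.apply_sub_one]; exact hadm.antitoneOn (Set.mem_Ici.2 le_rfl) ha ha
    exact hflat (h n) (by have := hadm.apply_nonneg n; omega) (by omega) ⟨n, heq, rfl⟩

theorem hasPlateauAt_iff_ncard_lt (hadm : C2Admissible h s) {v : ℤ} (hv : 1 ≤ v)
    (hvs : v ≤ s - 1) :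
    HasPlateauAt h v ↔ {n | v + 1 ≤ h n}.ncard + 2 < {n | v ≤ h n}.ncard := by
  obtain ⟨t, ht, hset⟩ := hadm.setOf_le_eq_Icc (c := v + 1) (by omega) (by omega)
  obtain ⟨t', ht', hset'⟩ := hadm.setOf_le_eq_Icc (c := v) hv (by omega)
  have hmem : ∀ m, v + 1 ≤ h m ↔ v ≤ m ∧ m ≤ t := fun m => by
    simpa using Set.ext_iff.1 hset m
  have hmem' : ∀ m, v ≤ h m ↔ v - 1 ≤ m ∧ m ≤ t' := fun m => Set.ext_iff.1 hset' m
  rw [hset, hset', Int.ncard_Icc, Int.ncard_Icc]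
  constructor
  · rintro ⟨n, hflat, rfl⟩
    have hn := hadm.sub_one_le_of_apply_succ_eq hflat (by omega)
    have := (hmem n).not.1 (by omega)
    have := (hmem' (n + 1)).1 (by omega)
    omega
  · intro htt
    have := (hmem (t + 1)).not.2 (by omega)
    have := (hmem' (t + 1 + 1)).2 (by omega)
    have := hadm.apply_succ_le (n := t + 1) (by omega)
    exact ⟨t + 1, by omega, by omega⟩

end C2Admissible

theorem decreasing_type_iff_no_gaps (h : ℤ → ℤ) (s : ℤ)
    (hadm : C2Admissible h s) (k : ℤ → ℤ)
    (hk : ∀ i, 1 ≤ i → i ≤ s → k i = ({n : ℤ | s + 1 - i ≤ h n}.ncard : ℤ)) :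
    DecreasingType h ↔ ∀ i, 1 ≤ i → i ≤ s - 1 → k (i + 1) ≤ k i + 2 := by
  have hgap : ∀ i, 1 ≤ i → i ≤ s - 1 →
      (k (i + 1) ≤ k i + 2 ↔ ¬ HasPlateauAt h (s - i)) := by
    intro i hi his
    rw [hk i hi (by omega), hk (i + 1) (by omega) (by omega),
      hadm.hasPlateauAt_iff_ncard_lt (by omega) (by omega),
      show s + 1 - (i + 1) = s - i by ring, show s - i + 1 = s + 1 - i by ring]
    omega
  rw [hadm.decreasingType_iff]
  refine ⟨fun H i hi his => (hgap i hi his).2 (H _ (by omega) (by omega)), fun H v hv hvs => ?_⟩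
  simpa using (hgap (s - v) (by omega) (by omega)).1 (H _ (by omega) (by omega))
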